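/- Let u be a finite game whose payoffs are bounded by L (i.e. |u_i(b)| < L for all players i and all profiles b), and let a be a pure Nash equilibrium of u. Then in the game v = u + Σ_{i∈[n]} z(2L, i, a_{-i}), the profile a is a simultaneous maximizer: v_i(a) ≥ v_i(b) for every player i and every profile b ∈ A. -/

import Mathlib

/-! Player `i`'s bonus `2L` in `v` is paid exactly at the profiles where the opponents play
`a₋ᵢ`. On those profiles `a` is a best response by the equilibrium property; on all others `b`
earns no bonus, and `u i b < L < u i a + 2L`. -/

open scoped Classical

noncomputable section

/-- A finite normal-form game on action sets `A i`: a payoff function for each player. -/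
abbrev Game {n : ℕ} (A : Fin n → Type*) : Type _ :=
  Fin n → (∀ j, A j) → ℝ

/-- Opponents' action profiles of player `i`. -/
abbrev Opp {n : ℕ} (A : Fin n → Type*) (i : Fin n) : Type _ :=
  ∀ j : {j : Fin n // j ≠ i}, A j.1

/-- The game `z(c, i, b₋ᵢ)`: player `i` receives payoff `c` at every profile whose
opponents' component equals `b`, and `0` otherwise; all other players always get `0`. -/
def zGame {n : ℕ} {A : Fin n → Type*} (c : ℝ) (i : Fin n) (b : Opp A i) : Game A :=
  fun j a => if j = i ∧ (∀ k : {k : Fin n // k ≠ i}, a k.1 = b k) then c else 0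

/-- The full action profile obtained from own action `ai` of player `i` and an
opponents' profile `b`. -/
def merge {n : ℕ} {A : Fin n → Type*} (i : Fin n) (ai : A i) (b : Opp A i) : ∀ j, A j :=
  fun j => if h : j = i then cast (congrArg A h.symm) ai else b ⟨j, h⟩

/-- The pure individually rational value of player `i`:
`pir_i(u) = max_{a_i} min_{a_{-i}} u_i(a_i, a_{-i})`. -/
def pir {n : ℕ} {A : Fin n → Type*} (u : Game A) (i : Fin n) : ℝ :=
  ⨆ ai : A i, ⨅ b : Opp A i, u i (merge i ai b)

/-- `a` is a pure Nash equilibrium of `u`. -/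
def IsPNE {n : ℕ} {A : Fin n → Type*} (u : Game A) (a : ∀ j, A j) : Prop :=
  ∀ (i : Fin n) (bi : A i), u i (Function.update a i bi) ≤ u i a

theorem IsPNE.apply_le_of_forall_ne {n : ℕ} {A : Fin n → Type*} {u : Game A}
    {a : ∀ j, A j} (ha : IsPNE u a) {i : Fin n} {b : ∀ j, A j}
    (hb : ∀ k : {k : Fin n // k ≠ i}, b k.1 = a k.1) : u i b ≤ u i a := by
  have hb_update : b = Function.update a i (b i) :=
    Function.eq_update_iff.mpr ⟨rfl, fun k hk => hb ⟨k, hk⟩⟩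
  simpa only [← hb_update] using ha i (b i)

theorem zGame_apply_of_ne {n : ℕ} {A : Fin n → Type*} (c : ℝ) {i j : Fin n} (h : j ≠ i)
    (b : Opp A i) (x : ∀ k, A k) : zGame c i b j x = 0 :=
  if_neg fun hj => h hj.1

theorem zGame_apply_self {n : ℕ} {A : Fin n → Type*} (c : ℝ) (i : Fin n) (b : Opp A i)
    (x : ∀ k, A k) :
    zGame c i b i x = if ∀ k : {k : Fin n // k ≠ i}, x k.1 = b k then c else 0 := by
  simp only [zGame, true_and]

theorem sum_zGame_apply {n : ℕ} {A : Fin n → Type*} (c : ℝ) (b : ∀ j, Opp A j) (i : Fin n)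
    (x : ∀ k, A k) : (∑ j : Fin n, zGame c j (b j)) i x = zGame c i (b i) i x := by
  rw [Finset.sum_apply, Finset.sum_apply,
    Finset.sum_eq_single_of_mem i (Finset.mem_univ i)
      fun j _ hj => zGame_apply_of_ne c (Ne.symm hj) (b j) x]

theorem statement10_general {n : ℕ} (A : Fin n → Type*)
    (u : Game A) (L : ℝ) (hL : ∀ (i : Fin n) (b : ∀ j, A j), |u i b| < L)
    (a : ∀ j, A j) (ha : IsPNE u a)
    (v : Game A) (hv : v = u + ∑ i : Fin n, zGame (2 * L) i (fun k => a k.1)) :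
    ∀ (i : Fin n) (b : ∀ j, A j), v i a ≥ v i b := by
  subst hv
  intro i b
  simp only [Pi.add_apply, sum_zGame_apply, zGame_apply_self, implies_true, if_true]
  have ha_bound := abs_lt.mp (hL i a)
  have hb_bound := abs_lt.mp (hL i b)
  split_ifs with hb
  · linarith [ha.apply_le_of_forall_ne hb]
  · linarith

/-- If the payoffs of `u` are bounded by `L` and `a` is a pure Nash equilibrium of `u`,
then in `v = u + ∑ᵢ z(2L, i, a₋ᵢ)` the profile `a` is a simultaneous maximizer. -/
theorem statement10 {n : ℕ} (hn : 0 < n) (A : Fin n → Type*)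
    [∀ i, Fintype (A i)] [∀ i, Nonempty (A i)]
    (u : Game A) (L : ℝ) (hL : ∀ (i : Fin n) (b : ∀ j, A j), |u i b| < L)
    (a : ∀ j, A j) (ha : IsPNE u a)
    (v : Game A) (hv : v = u + ∑ i : Fin n, zGame (2 * L) i (fun k => a k.1)) :
    ∀ (i : Fin n) (b : ∀ j, A j), v i a ≥ v i b :=
  statement10_general A u L hL a ha v hv
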